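/- Removing all transitions whose denotation is empty from an LTA does not change the language of the automaton: the language of the pruned automaton equals the language of the original automaton. -/
import Mathlib


inductive Term (F : Type) : Type where
  | node : F → List (Term F) → Term F

structure Transition (Q F : Type) : Type where
  sym : F
  srcs : List Q
  constraint : Term F → Prop
  tgt : Q

inductive Denotes {Q F : Type} (Δ : Set (Transition Q F)) : Q → Term F → Prop where
  | step (δ : Transition Q F) (ts : List (Term F))
      (hδ : δ ∈ Δ)
      (hlen : ts.length = δ.srcs.length)
      (hts : ∀ (i : ℕ) (h1 : i < ts.length) (h2 : i < δ.srcs.length),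
        Denotes Δ (δ.srcs.get ⟨i, h2⟩) (ts.get ⟨i, h1⟩))
      (hc : δ.constraint (Term.node δ.sym ts)) :
      Denotes Δ δ.tgt (Term.node δ.sym ts)

structure LTA (Q F : Type) : Type where
  final : Set Q
  Δ : Set (Transition Q F)

def LTALang {Q F : Type} (A : LTA Q F) : Set (Term F) :=
  ⋃ q ∈ A.final, {t | Denotes A.Δ q t}

/-- The denotation of a transition `δ` relative to the transition set `Δ`. -/
def DenotesTrans {Q F : Type} (Δ : Set (Transition Q F)) (δ : Transition Q F) :
    Set (Term F) :=
  {t | ∃ ts : List (Term F), t = Term.node δ.sym ts ∧ ts.length = δ.srcs.length ∧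
    (∀ (i : ℕ) (h1 : i < ts.length) (h2 : i < δ.srcs.length),
      Denotes Δ (δ.srcs.get ⟨i, h2⟩) (ts.get ⟨i, h1⟩)) ∧
    δ.constraint t}

lemma Denotes.mono {Q F : Type} {Δ Δ' : Set (Transition Q F)} (h : Δ ⊆ Δ')
    {q : Q} {t : Term F} (hd : Denotes Δ q t) : Denotes Δ' q t := by
  induction hd with
  | step δ ts hδ hlen hts hc ih =>
    exact Denotes.step δ ts (h hδ) hlen ih hc

lemma Denotes.prune {Q F : Type} {Δ : Set (Transition Q F)}
    {q : Q} {t : Term F} (hd : Denotes Δ q t) :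
    Denotes {δ ∈ Δ | (DenotesTrans Δ δ).Nonempty} q t := by
  induction hd with
  | step δ ts hδ hlen hts hc ih =>
    refine Denotes.step δ ts ⟨hδ, ⟨Term.node δ.sym ts, ts, rfl, hlen, hts, hc⟩⟩ hlen ?_ hc
    intro i h1 h2
    exact (ih i h1 h2).mono (fun x hx => by
      obtain ⟨hx1, t', hx2⟩ := hx
      exact ⟨hx1, t', hx2⟩)

/-- Removing all transitions with empty denotation does not change the language. -/
theorem prune_empty_preserves_language {Q F : Type} (A : LTA Q F) :
    LTALang ⟨A.final, {δ ∈ A.Δ | (DenotesTrans A.Δ δ).Nonempty}⟩ = LTALang A := by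
  ext t
  simp only [LTALang, Set.mem_iUnion, Set.mem_setOf_eq]
  constructor
  · rintro ⟨q, hq, hd⟩
    exact ⟨q, hq, hd.mono (fun δ hδ => hδ.1)⟩
  · rintro ⟨q, hq, hd⟩
    exact ⟨q, hq, hd.prune⟩
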